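/- Let u, w ∈ G(m, p, n) and suppose that codimfix(u) + codimfix(u⁻¹w) = n + c(w) − 2·|Π_u(w)| + #{parts of Π_u(w) of nonzero total weight}. Then for each part B of Π_u(w): c(u|_B) + c(u⁻¹w|_B) = #Supp(B) − c(w|_B) + 2, and exactly one of the following holds: (i) wt(w|_B) = 0 and all cycles of u|_B and of u⁻¹w|_B have weight 0; (ii) wt(u|_B) = wt(w|_B) ≠ 0, exactly one cycle of u|_B has weight wt(w|_B) while all its other cycles have weight 0, and all cycles of u⁻¹w|_B have weight 0; (iii) wt(u⁻¹w|_B) = wt(w|_B) ≠ 0, exactly one cycle of u⁻¹w|_B has weight wt(w|_B) while all its other cycles have weight 0, and all cycles of u|_B have weight 0. -/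

import Mathlib

open Equiv Finset
@[ext]
structure GW (m n : ℕ) where
  perm : Equiv.Perm (Fin n)
  wt : Fin n → ZMod m
namespace GW
variable {m n : ℕ}
instance : Mul (GW m n) :=
  ⟨fun x y => ⟨x.perm * y.perm, fun i => x.wt i + y.wt (x.perm⁻¹ i)⟩⟩
instance : One (GW m n) := ⟨⟨1, 0⟩⟩
instance : Inv (GW m n) := ⟨fun x => ⟨x.perm⁻¹, fun i => -x.wt (x.perm i)⟩⟩
@[simp] theorem mul_perm (x y : GW m n) : (x * y).perm = x.perm * y.perm := rfl
@[simp] theorem mul_wt (x y : GW m n) (i : Fin n) :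
    (x * y).wt i = x.wt i + y.wt (x.perm⁻¹ i) := rfl
@[simp] theorem one_perm : (1 : GW m n).perm = 1 := rfl
@[simp] theorem one_wt (i : Fin n) : (1 : GW m n).wt i = 0 := rfl
@[simp] theorem inv_perm (x : GW m n) : (x⁻¹).perm = x.perm⁻¹ := rfl
@[simp] theorem inv_wt (x : GW m n) (i : Fin n) : (x⁻¹).wt i = -x.wt (x.perm i) := rfl
private theorem gw_mul_assoc (a b c : GW m n) : a * b * c = a * (b * c) := by
  ext i
  · simp [mul_assoc]
  · simp [mul_inv_rev, add_assoc]
private theorem gw_one_mul (a : GW m n) : 1 * a = a := by ext i <;> simp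
private theorem gw_mul_one (a : GW m n) : a * 1 = a := by ext i <;> simp
private theorem gw_inv_mul_cancel (a : GW m n) : a⁻¹ * a = 1 := by ext i <;> simp
instance : Group (GW m n) where
  mul := (· * ·)
  one := 1
  inv := Inv.inv
  mul_assoc := gw_mul_assoc
  one_mul := gw_one_mul
  mul_one := gw_mul_one
  inv_mul_cancel := gw_inv_mul_cancel
def cycleOf (w : GW m n) (i : Fin n) : Finset (Fin n) :=
  Finset.univ.filter fun j => w.perm.SameCycle i j
def cycles (w : GW m n) : Finset (Finset (Fin n)) :=
  Finset.univ.image fun i => w.cycleOf i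
def cycWt (w : GW m n) (C : Finset (Fin n)) : ZMod m := ∑ i ∈ C, w.wt i
def numCycles (w : GW m n) : ℕ := (cycles w).card
def c0 (w : GW m n) : ℕ := ((cycles w).filter fun C => cycWt w C = 0).card
def codimfix (w : GW m n) : ℕ := n - c0 w
def wtTot (w : GW m n) : ZMod m := ∑ i, w.wt i

-- NEW PIECES BELOW --

/-- The base relation on cycles of `w` induced by `u`: two cycles of `w` are related if
some cycle of `u` meets both of them. -/
def piRelBase (u w : GW m n) (C₁ C₂ : Finset (Fin n)) : Prop :=
  C₁ ∈ cycles w ∧ C₂ ∈ cycles w ∧ ∃ D ∈ cycles u, (D ∩ C₁).Nonempty ∧ (D ∩ C₂).Nonempty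

/-- The equivalence relation on the cycles of `w` generated by `piRelBase`. -/
def piRel (u w : GW m n) : Finset (Fin n) → Finset (Fin n) → Prop :=
  Relation.EqvGen (piRelBase u w)

open Classical in
/-- The part of the partition `Π_u(w)` containing the cycle `C` of `w`. -/
noncomputable def piPart (u w : GW m n) (C : Finset (Fin n)) : Finset (Finset (Fin n)) :=
  (cycles w).filter fun C' => piRel u w C C'

/-- The set partition `Π_u(w)` of the cycles of `w`, as the set of its parts. -/
noncomputable def piParts (u w : GW m n) : Finset (Finset (Finset (Fin n))) :=
  (cycles w).image fun C => piPart u w C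

/-- The weight of a collection `B` of cycles: the sum of the weights of its cycles. -/
def partWt (w : GW m n) (B : Finset (Finset (Fin n))) : ZMod m :=
  ∑ C ∈ B, cycWt w C

open Classical in
/-- The number of parts of `Π_u(w)` of nonzero total weight. -/
noncomputable def piPartsNonzeroWt (u w : GW m n) : ℕ :=
  ((piParts u w).filter fun B => partWt w B ≠ 0).card

/-- The support of a collection of cycles: the union of the cycles' underlying sets. -/
def supp (B : Finset (Finset (Fin n))) : Finset (Fin n) := B.sup id

/-- Restriction of a permutation to an invariant set `A` (junk value `1` if `A` is
not invariant): it agrees with `σ` on `A` and is the identity off `A`. -/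
noncomputable def restrictPerm (σ : Equiv.Perm (Fin n)) (A : Finset (Fin n)) :
    Equiv.Perm (Fin n) :=
  if h : ∀ i, σ i ∈ A ↔ i ∈ A then
    { toFun := fun i => if i ∈ A then σ i else i
      invFun := fun i => if i ∈ A then σ.symm i else i
      left_inv := by
        intro i
        by_cases hi : i ∈ A
        · simp [hi, (h i).mpr hi]
        · simp [hi]
      right_inv := by
        intro j
        by_cases hj : j ∈ A
        · have hs : σ.symm j ∈ A := by
            have h2 := h (σ.symm j)
            rw [Equiv.apply_symm_apply] at h2
            exact h2.mp hj
          simp [hj, hs]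
        · simp [hj] }
  else 1


/-- The restriction `x|_A` of `x` to a subset `A` of `{1,…,n}` (stabilized by `x`):
it agrees with `x` on `A` and acts as the identity, with weight `0`, off `A`. -/
noncomputable def restrict (x : GW m n) (A : Finset (Fin n)) : GW m n :=
  ⟨restrictPerm x.perm A, fun i => if i ∈ A then x.wt i else 0⟩

/-- The cycles of `x` contained in `A`; for `x = y|_A` this gives the cycles of the
restriction of `y` to `A`, viewed as an element of `G(m,1,#A)`. -/
def cyclesIn (x : GW m n) (A : Finset (Fin n)) : Finset (Finset (Fin n)) :=
  (cycles x).filter fun C => C ⊆ A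

/-- The monomial matrix representing `w`: the nonzero entry in column `j` sits in row
`w.perm j` and equals `ζ^(a_(w.perm j))`, where `ζ = exp(2πi/m)`. -/
noncomputable def toMatrix (w : GW m n) : Matrix (Fin n) (Fin n) ℂ :=
  Matrix.of fun i j =>
    if w.perm j = i then Complex.exp (2 * Real.pi * Complex.I * ((w.wt i).val : ℂ) / (m : ℂ))
    else 0

/-- `S` (a set of cycles of `w`) can be partitioned into singletons whose weight is
`0 (mod p)` and pairs of cycles whose weights sum to `0` in `ℤ/mℤ`; encoded by an
involution pairing up the cycles. -/
def PairedUp (p : ℕ) (hpm : p ∣ m) (w : GW m n) (S : Finset (Finset (Fin n))) : Prop :=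
  ∃ π : {C // C ∈ S} → {C // C ∈ S}, Function.Involutive π ∧
    (∀ C, π C = C → ZMod.castHom hpm (ZMod p) (cycWt w C.1) = 0) ∧
    (∀ C, π C ≠ C → cycWt w C.1 + cycWt w (π C).1 = 0)

/-- Membership in `G(m,p,n)`: the total weight is `0 (mod p)`. -/
def Gmem (p : ℕ) (hpm : p ∣ m) (w : GW m n) : Prop :=
  ZMod.castHom hpm (ZMod p) (wtTot w) = 0

/-- A reflection of `G(m,p,n)`: an element of the group whose fixed space has codimension 1. -/
def IsRefl (p : ℕ) (hpm : p ∣ m) (t : GW m n) : Prop :=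
  Gmem p hpm t ∧ codimfix t = 1

/-- The reflection length of `w` with respect to the reflections of `G(m,p,n)`. -/
noncomputable def lR (p : ℕ) (hpm : p ∣ m) (w : GW m n) : ℕ :=
  sInf {k | ∃ l : List (GW m n), (∀ t ∈ l, IsRefl p hpm t) ∧ l.length = k ∧ l.prod = w}

/-- The order `≤_f` determined by a subadditive function `f`. -/
def leF (f : GW m n → ℕ) (x y : GW m n) : Prop := f x + f (x⁻¹ * y) = f y

/-- The interval `[id, w]_f` inside the poset `(G(m,p,n), ≤_f)`. -/
def interval (p : ℕ) (hpm : p ∣ m) (f : GW m n → ℕ) (w : GW m n) : Set (GW m n) :=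
  {u | Gmem p hpm u ∧ leF f u w}

/-- A vector `v ∈ ℂⁿ` is regular for `G(m,p,n)` if it is fixed by no reflection. -/
def IsRegularVec (p : ℕ) (hpm : p ∣ m) (v : Fin n → ℂ) : Prop :=
  ∀ t : GW m n, IsRefl p hpm t → (toMatrix t).mulVec v ≠ v

/-- An element `w ∈ G(m,p,n)` is regular if it has an eigenvector that is a regular vector. -/
def IsRegularElt (p : ℕ) (hpm : p ∣ m) (w : GW m n) : Prop :=
  ∃ v : Fin n → ℂ, v ≠ 0 ∧ (∃ c : ℂ, (toMatrix w).mulVec v = c • v) ∧ IsRegularVec p hpm v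

end GW

namespace GW

variable {m n : ℕ}

/-- All cycles of the restriction `x|_A` (viewed as an element of `G(m,1,#A)`)
have weight `0`. -/
def allCyclesZero (x : GW m n) (A : Finset (Fin n)) : Prop :=
  ∀ C ∈ cyclesIn (restrict x A) A, cycWt (restrict x A) C = 0

/-- The restriction `x|_A` has exactly one cycle of weight `ω` while all its other
cycles have weight `0`. -/
def oneCycleOfWt (x : GW m n) (A : Finset (Fin n)) (ω : ZMod m) : Prop :=
  ∃ C₀ ∈ cyclesIn (restrict x A) A, cycWt (restrict x A) C₀ = ω ∧
    ∀ C ∈ cyclesIn (restrict x A) A, C ≠ C₀ → cycWt (restrict x A) C = 0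

/-- Case (i): `wt(w|_A) = 0` and all cycles of `u|_A` and of `u⁻¹w|_A` have weight 0. -/
def condI (u w : GW m n) (A : Finset (Fin n)) : Prop :=
  wtTot (restrict w A) = 0 ∧ allCyclesZero u A ∧ allCyclesZero (u⁻¹ * w) A

/-- Case (ii): `wt(u|_A) = wt(w|_A) ≠ 0`, exactly one cycle of `u|_A` has weight
`wt(w|_A)` while all its other cycles have weight 0, and all cycles of `u⁻¹w|_A` have
weight 0. -/
def condII (u w : GW m n) (A : Finset (Fin n)) : Prop :=
  wtTot (restrict u A) = wtTot (restrict w A) ∧ wtTot (restrict w A) ≠ 0 ∧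
    oneCycleOfWt u A (wtTot (restrict w A)) ∧ allCyclesZero (u⁻¹ * w) A

/-- Case (iii): `wt(u⁻¹w|_A) = wt(w|_A) ≠ 0`, exactly one cycle of `u⁻¹w|_A` has weight
`wt(w|_A)` while all its other cycles have weight 0, and all cycles of `u|_A` have
weight 0. -/
def condIII (u w : GW m n) (A : Finset (Fin n)) : Prop :=
  wtTot (restrict (u⁻¹ * w) A) = wtTot (restrict w A) ∧ wtTot (restrict w A) ≠ 0 ∧
    oneCycleOfWt (u⁻¹ * w) A (wtTot (restrict w A)) ∧ allCyclesZero u A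

end GW

/-!
For a part `B` of `Π_u(w)` with support `A`, the restrictions of `u` and `u⁻¹w` to `A` multiply
to the restriction of `w`, and together they act transitively on `A`. The Hurwitz inequality
for permutations therefore gives `c(u|_B) + c(u⁻¹w|_B) + c(w|_B) ≤ #A + 2`. Keeping only the
weight-zero cycles of `u|_B` and `u⁻¹w|_B` loses at least one more cycle when `wt(w|_B) ≠ 0`,
since the weights of `u|_B` and `u⁻¹w|_B` add up to that of `w|_B`. Summed over the parts,
these inequalities say
`codimfix(u) + codimfix(u⁻¹w) ≥ n + c(w) − 2|Π_u(w)| + #{parts of nonzero weight}`,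
so the hypothesis forces equality in every part, and the three ways of attaining equality are
the cases (i), (ii), (iii).
-/

section JoinPair

variable {α : Type*} {r s : α → α → Prop}

/-- For an equivalence `r`, the equivalence obtained by merging the classes of `a` and `b`. -/
def joinPair (r : α → α → Prop) (a b : α) (x y : α) : Prop :=
  r x y ∨ (r x a ∧ r b y) ∨ (r x b ∧ r a y)

theorem Equivalence.joinPair (h : Equivalence r) (a b : α) : Equivalence (joinPair r a b) := by
  constructor
  · exact fun x => Or.inl (h.refl x)
  · rintro x y (hxy | ⟨h1, h2⟩ | ⟨h1, h2⟩)
    · exact Or.inl (h.symm hxy)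
    · exact Or.inr (Or.inr ⟨h.symm h2, h.symm h1⟩)
    · exact Or.inr (Or.inl ⟨h.symm h2, h.symm h1⟩)
  · rintro x y z (hxy | ⟨h1, h2⟩ | ⟨h1, h2⟩) (hyz | ⟨h3, h4⟩ | ⟨h3, h4⟩)
    · exact Or.inl (h.trans hxy hyz)
    · exact Or.inr (Or.inl ⟨h.trans hxy h3, h4⟩)
    · exact Or.inr (Or.inr ⟨h.trans hxy h3, h4⟩)
    · exact Or.inr (Or.inl ⟨h1, h.trans h2 hyz⟩)
    · exact Or.inl (h.trans (h.trans h1 (h.symm (h.trans h2 h3))) h4)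
    · exact Or.inl (h.trans h1 h4)
    · exact Or.inr (Or.inr ⟨h1, h.trans h2 hyz⟩)
    · exact Or.inl (h.trans h1 h4)
    · exact Or.inl (h.trans (h.trans h1 (h.symm (h.trans h2 h3))) h4)

theorem joinPair_comm (r : α → α → Prop) (a b : α) : joinPair r a b = joinPair r b a := by
  ext x y
  simp only [joinPair]
  tauto

theorem le_joinPair (a b : α) : r ≤ joinPair r a b := fun _ _ => Or.inl

theorem joinPair_mono (h : r ≤ s) (a b : α) : joinPair r a b ≤ joinPair s a b := by
  rintro x y (hxy | ⟨h1, h2⟩ | ⟨h1, h2⟩)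
  · exact Or.inl (h _ _ hxy)
  · exact Or.inr (Or.inl ⟨h _ _ h1, h _ _ h2⟩)
  · exact Or.inr (Or.inr ⟨h _ _ h1, h _ _ h2⟩)

theorem joinPair_le (hs : Equivalence s) (h : r ≤ s) {a b : α} (hab : s a b) :
    joinPair r a b ≤ s := by
  rintro x y (hxy | ⟨h1, h2⟩ | ⟨h1, h2⟩)
  · exact h _ _ hxy
  · exact hs.trans (h _ _ h1) (hs.trans hab (h _ _ h2))
  · exact hs.trans (h _ _ h1) (hs.trans (hs.symm hab) (h _ _ h2))

theorem Equivalence.eqvGen_le (hs : Equivalence s) (h : r ≤ s) : Relation.EqvGen r ≤ s :=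
  fun _ _ hxy => hs.eqvGen_iff.mp (Relation.EqvGen.mono h _ _ hxy)

end JoinPair

section EqvClasses

variable {α : Type*} [Fintype α] {r s : α → α → Prop}

open Classical in
noncomputable def eqvClass (r : α → α → Prop) (x : α) : Finset α := univ.filter (r x)

open Classical in
noncomputable def eqvClasses (r : α → α → Prop) : Finset (Finset α) := univ.image (eqvClass r)

noncomputable def numEqvClasses (r : α → α → Prop) : ℕ := (eqvClasses r).card

@[simp] theorem mem_eqvClass {x y : α} : y ∈ eqvClass r x ↔ r x y := by
  simp [eqvClass]

theorem mem_eqvClasses {C : Finset α} : C ∈ eqvClasses r ↔ ∃ x, eqvClass r x = C := by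
  simp [eqvClasses]

theorem eqvClass_mem_eqvClasses (r : α → α → Prop) (x : α) : eqvClass r x ∈ eqvClasses r :=
  mem_eqvClasses.mpr ⟨x, rfl⟩

theorem Equivalence.eqvClass_eq_iff (h : Equivalence r) {x y : α} :
    eqvClass r x = eqvClass r y ↔ r x y := by
  refine ⟨fun hxy => mem_eqvClass.mp (hxy ▸ mem_eqvClass.mpr (h.refl y)), fun hxy => ?_⟩
  ext z
  simp only [mem_eqvClass]
  exact ⟨h.trans (h.symm hxy), h.trans hxy⟩

theorem numEqvClasses_le_card (r : α → α → Prop) : numEqvClasses r ≤ Fintype.card α := by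
  classical
  exact card_image_le.trans_eq card_univ

theorem numEqvClasses_le_of_le (hr : Equivalence r) (hs : Equivalence s) (h : r ≤ s) :
    numEqvClasses s ≤ numEqvClasses r := by
  classical
  let saturate (C : Finset α) : Finset α := univ.filter fun y => ∃ z ∈ C, s z y
  have hsat : ∀ x, saturate (eqvClass r x) = eqvClass s x := fun x => by
    ext y
    simp only [saturate, mem_filter, mem_univ, true_and, mem_eqvClass]
    exact ⟨fun ⟨z, hz, hzy⟩ => hs.trans (h _ _ hz) hzy, fun hxy => ⟨x, hr.refl x, hxy⟩⟩
  have : eqvClasses s = (eqvClasses r).image saturate := by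
    simp only [eqvClasses, image_image, Function.comp_def, hsat]
  rw [numEqvClasses, this]
  exact card_image_le

theorem numEqvClasses_le_card_compl_add_one [DecidableEq α] (h : Equivalence r) {A : Finset α}
    (hA : ∀ i ∈ A, ∀ j ∈ A, r i j) : numEqvClasses r ≤ Aᶜ.card + 1 := by
  classical
  have hsplit : eqvClasses r ⊆ A.image (eqvClass r) ∪ Aᶜ.image (eqvClass r) := by
    intro C hC
    obtain ⟨x, rfl⟩ := mem_eqvClasses.mp hC
    by_cases hx : x ∈ A
    · exact mem_union_left _ (mem_image_of_mem _ hx)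
    · exact mem_union_right _ (mem_image_of_mem _ (mem_compl.mpr hx))
  have hA1 : (A.image (eqvClass r)).card ≤ 1 := by
    simp only [card_le_one, mem_image]
    rintro _ ⟨i, hi, rfl⟩ _ ⟨j, hj, rfl⟩
    exact h.eqvClass_eq_iff.mpr (hA i hi j hj)
  have := card_le_card hsplit
  have := card_image_le (s := Aᶜ) (f := eqvClass r)
  have := card_union_le (A.image (eqvClass r)) (Aᶜ.image (eqvClass r))
  rw [numEqvClasses]
  omega

theorem eqvClass_joinPair_of_rel [DecidableEq α] (h : Equivalence r) {a b z : α}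
    (hab : ¬ r a b) (hz : r a z) :
    eqvClass (joinPair r a b) z = eqvClass r a ∪ eqvClass r b := by
  have hzb : ¬ r z b := fun hzb => hab (h.trans hz hzb)
  ext y
  simp only [mem_eqvClass, mem_union, joinPair, hzb, false_and, or_false]
  exact ⟨fun hy => hy.elim (fun hzy => Or.inl (h.trans hz hzy)) (fun hy => Or.inr hy.2),
    fun hy => hy.elim (fun hay => Or.inl (h.trans (h.symm hz) hay))
      (fun hby => Or.inr ⟨h.symm hz, hby⟩)⟩

theorem eqvClass_joinPair_of_not_rel {a b z : α} (ha : ¬ r z a) (hb : ¬ r z b) :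
    eqvClass (joinPair r a b) z = eqvClass r z := by
  ext y
  simp [joinPair, ha, hb]

theorem eqvClasses_joinPair [DecidableEq α] (h : Equivalence r) {a b : α} (hab : ¬ r a b) :
    eqvClasses (joinPair r a b) =
      insert (eqvClass r a ∪ eqvClass r b) (eqvClasses r \ {eqvClass r a, eqvClass r b}) := by
  ext C
  simp only [mem_eqvClasses, mem_insert, mem_sdiff, mem_singleton]
  constructor
  · rintro ⟨z, rfl⟩
    by_cases hza : r a z
    · exact Or.inl (eqvClass_joinPair_of_rel h hab hza)
    by_cases hzb : r b z
    · rw [joinPair_comm, eqvClass_joinPair_of_rel h (fun hc => hab (h.symm hc)) hzb, union_comm]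
      exact Or.inl rfl
    · have hza' : ¬ r z a := fun hc => hza (h.symm hc)
      have hzb' : ¬ r z b := fun hc => hzb (h.symm hc)
      rw [eqvClass_joinPair_of_not_rel hza' hzb', h.eqvClass_eq_iff, h.eqvClass_eq_iff]
      exact Or.inr ⟨⟨z, rfl⟩, not_or.mpr ⟨hza', hzb'⟩⟩
  · rintro (rfl | ⟨⟨z, rfl⟩, hz⟩)
    · exact ⟨a, eqvClass_joinPair_of_rel h hab (h.refl a)⟩
    · rw [h.eqvClass_eq_iff, h.eqvClass_eq_iff, not_or] at hz
      exact ⟨z, eqvClass_joinPair_of_not_rel hz.1 hz.2⟩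

theorem numEqvClasses_joinPair_add_one (h : Equivalence r) {a b : α} (hab : ¬ r a b) :
    numEqvClasses (joinPair r a b) + 1 = numEqvClasses r := by
  classical
  have hne : eqvClass r a ≠ eqvClass r b := fun hc => hab (h.eqvClass_eq_iff.mp hc)
  have hpair : {eqvClass r a, eqvClass r b} ⊆ eqvClasses r := by
    simp [insert_subset_iff, eqvClass_mem_eqvClasses]
  have hmerged : eqvClass r a ∪ eqvClass r b ∉ eqvClasses r \ {eqvClass r a, eqvClass r b} := by
    intro hmem
    obtain ⟨hmem, hnot⟩ := mem_sdiff.mp hmem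
    obtain ⟨z, hz⟩ := mem_eqvClasses.mp hmem
    have hza : r z a := mem_eqvClass.mp (hz ▸ mem_union_left _ (mem_eqvClass.mpr (h.refl a)))
    exact hnot (by rw [← hz, h.eqvClass_eq_iff.mpr hza]; exact mem_insert_self _ _)
  have htwo := card_le_card hpair
  rw [card_pair hne] at htwo
  rw [numEqvClasses, numEqvClasses, eqvClasses_joinPair h hab, card_insert_of_notMem hmerged,
    card_sdiff_of_subset hpair, card_pair hne]
  omega

theorem numEqvClasses_le_joinPair_add_one (h : Equivalence r) (a b : α) :
    numEqvClasses r ≤ numEqvClasses (joinPair r a b) + 1 := by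
  by_cases hab : r a b
  · have := numEqvClasses_le_of_le (h.joinPair a b) h (joinPair_le h le_rfl hab)
    omega
  · exact (numEqvClasses_joinPair_add_one h hab).ge

end EqvClasses

namespace Equiv.Perm

variable {α : Type*}

theorem sameCycle_le_of_forall_rel_apply {σ : Perm α} {r : α → α → Prop} (hr : Equivalence r)
    (h : ∀ z, r z (σ z)) : σ.SameCycle ≤ r := by
  rintro x _ ⟨k, rfl⟩
  induction k using Int.induction_on with
  | zero => exact hr.refl x
  | succ k ih =>
    rw [add_comm, zpow_one_add, mul_apply]
    exact hr.trans ih (h _)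
  | pred k ih =>
    have hstep : σ ((σ ^ (-(k : ℤ) - 1)) x) = (σ ^ (-(k : ℤ))) x := by
      rw [← mul_apply, ← zpow_one_add, add_sub_cancel]
    exact hr.trans ih (hr.symm (hstep ▸ h _))

def Stabilizes (σ : Perm α) (A : Finset α) : Prop := ∀ i, σ i ∈ A ↔ i ∈ A

theorem Stabilizes.inv {σ : Perm α} {A : Finset α} (h : σ.Stabilizes A) : σ⁻¹.Stabilizes A :=
  fun i => by simpa using (h (σ⁻¹ i)).symm

theorem Stabilizes.mul {σ τ : Perm α} {A : Finset α} (hσ : σ.Stabilizes A)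
    (hτ : τ.Stabilizes A) : (σ * τ).Stabilizes A :=
  fun i => by rw [mul_apply, hσ, hτ]

theorem Stabilizes.mem_iff_of_sameCycle {σ : Perm α} {A : Finset α} (h : σ.Stabilizes A)
    {i j : α} (hij : σ.SameCycle i j) : i ∈ A ↔ j ∈ A :=
  sameCycle_le_of_forall_rel_apply (r := fun s t => s ∈ A ↔ t ∈ A)
    ⟨fun _ => Iff.rfl, Iff.symm, Iff.trans⟩ (fun z => (h z).symm) i j hij

theorem sameCycle_swap_mul_le [DecidableEq α] (σ : Perm α) (a b : α) :
    (swap a b * σ).SameCycle ≤ joinPair σ.SameCycle a b := by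
  refine sameCycle_le_of_forall_rel_apply ((SameCycle.equivalence σ).joinPair a b) fun z => ?_
  have hz : σ.SameCycle z (σ z) := sameCycle_apply_right.mpr .rfl
  rw [mul_apply]
  by_cases ha : σ z = a
  · rw [ha, swap_apply_left]
    exact Or.inr (Or.inl ⟨ha ▸ hz, .rfl⟩)
  by_cases hb : σ z = b
  · rw [hb, swap_apply_right]
    exact Or.inr (Or.inr ⟨hb ▸ hz, .rfl⟩)
  · rw [swap_apply_of_ne_of_ne ha hb]
    exact Or.inl hz

/-- Walking along the `σ`-cycle of `a`, the permutation `swap a b * σ` agrees with `σ` until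
the cycle closes up at `a`, where it jumps to `b` instead. -/
theorem sameCycle_swap_mul_of_not_sameCycle [Fintype α] [DecidableEq α] {σ : Perm α} {a b : α}
    (h : ¬ σ.SameCycle a b) : (swap a b * σ).SameCycle a b := by
  have hper : ∃ k, (σ ^ (k + 1)) a = a :=
    ⟨orderOf σ - 1, by rw [Nat.sub_add_cancel (orderOf_pos σ), pow_orderOf_eq_one, one_apply]⟩
  classical
  set j := Nat.find hper
  have hmin : ∀ i < j, (σ ^ (i + 1)) a ≠ a := fun i hi => Nat.find_min hper hi
  have hagree : ∀ i ≤ j, ((swap a b * σ) ^ i) a = (σ ^ i) a := by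
    intro i hi
    induction i with
    | zero => rfl
    | succ i ih =>
      rw [pow_succ', mul_apply, ih (by omega), mul_apply, ← mul_apply σ, ← pow_succ']
      exact swap_apply_of_ne_of_ne (hmin i (by omega))
        fun hb => h (hb ▸ sameCycle_pow_right.mpr .rfl)
  refine ⟨(j + 1 : ℕ), ?_⟩
  rw [zpow_natCast, pow_succ', mul_apply, hagree j le_rfl, mul_apply, ← mul_apply σ, ← pow_succ',
    Nat.find_spec hper, swap_apply_left]

section Count

variable [Fintype α] [DecidableEq α]

theorem numEqvClasses_sameCycle_add_one_of_swap_mul {σ : Perm α} {a b : α}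
    (h : σ.SameCycle a b) (h' : ¬ (swap a b * σ).SameCycle a b) :
    numEqvClasses σ.SameCycle + 1 = numEqvClasses (swap a b * σ).SameCycle := by
  set τ := swap a b * σ
  have hτσ : τ.SameCycle ≤ σ.SameCycle :=
    (sameCycle_swap_mul_le σ a b).trans (joinPair_le (SameCycle.equivalence σ) le_rfl h)
  have hσ : σ.SameCycle = joinPair τ.SameCycle a b :=
    le_antisymm (swap_mul_self_mul a b σ ▸ sameCycle_swap_mul_le τ a b)
      (joinPair_le (SameCycle.equivalence σ) hτσ h)
  rw [hσ]
  exact numEqvClasses_joinPair_add_one (SameCycle.equivalence τ) h'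

theorem numEqvClasses_sameCycle_swap_mul_add_one {σ : Perm α} {a b : α}
    (h : ¬ σ.SameCycle a b) :
    numEqvClasses (swap a b * σ).SameCycle + 1 = numEqvClasses σ.SameCycle := by
  have := numEqvClasses_sameCycle_add_one_of_swap_mul (sameCycle_swap_mul_of_not_sameCycle h)
    (by rwa [swap_mul_self_mul])
  rwa [swap_mul_self_mul] at this

theorem numEqvClasses_sameCycle_swap_mul_le (σ : Perm α) (a b : α) :
    numEqvClasses (swap a b * σ).SameCycle ≤ numEqvClasses σ.SameCycle + 1 := by
  have hσ : σ.SameCycle ≤ joinPair (swap a b * σ).SameCycle a b := by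
    simpa only [swap_mul_self_mul] using sameCycle_swap_mul_le (swap a b * σ) a b
  have := numEqvClasses_le_of_le (SameCycle.equivalence σ)
    ((SameCycle.equivalence _).joinPair a b) hσ
  have := numEqvClasses_le_joinPair_add_one (SameCycle.equivalence (swap a b * σ)) a b
  omega

end Count

/-- The orbit relation of the group generated by `σ` and `τ`. -/
def SameOrbit (σ τ : Perm α) : α → α → Prop :=
  Relation.EqvGen fun x y => σ.SameCycle x y ∨ τ.SameCycle x y

theorem SameOrbit.equivalence (σ τ : Perm α) : Equivalence (SameOrbit σ τ) :=
  Relation.EqvGen.is_equivalence _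

theorem sameCycle_le_sameOrbit_left (σ τ : Perm α) : σ.SameCycle ≤ SameOrbit σ τ :=
  fun _ _ h => .rel _ _ (.inl h)

theorem sameCycle_le_sameOrbit_right (σ τ : Perm α) : τ.SameCycle ≤ SameOrbit σ τ :=
  fun _ _ h => .rel _ _ (.inr h)

theorem sameOrbit_le {σ τ : Perm α} {r : α → α → Prop} (hr : Equivalence r)
    (hσ : σ.SameCycle ≤ r) (hτ : τ.SameCycle ≤ r) : SameOrbit σ τ ≤ r :=
  hr.eqvGen_le fun _ _ h => h.elim (hσ _ _) (hτ _ _)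

theorem sameCycle_mul_le_sameOrbit (σ τ : Perm α) : (σ * τ).SameCycle ≤ SameOrbit σ τ := by
  have hQ := SameOrbit.equivalence σ τ
  refine sameCycle_le_of_forall_rel_apply hQ fun z => hQ.trans (y := τ z) ?_ ?_
  · exact sameCycle_le_sameOrbit_right σ τ _ _ (sameCycle_apply_right.mpr .rfl)
  · exact sameCycle_le_sameOrbit_left σ τ _ _ (sameCycle_apply_right.mpr .rfl)

theorem sameOrbit_swap_mul_le [DecidableEq α] (σ τ : Perm α) (a b : α) :
    SameOrbit (swap a b * σ) τ ≤ joinPair (SameOrbit σ τ) a b :=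
  sameOrbit_le ((SameOrbit.equivalence σ τ).joinPair a b)
    ((sameCycle_swap_mul_le σ a b).trans (joinPair_mono (sameCycle_le_sameOrbit_left σ τ) a b))
    ((sameCycle_le_sameOrbit_right σ τ).trans (le_joinPair a b))

/-- The Hurwitz inequality. Induct on `x`, writing `x = swap a (x a) * x'` where `x'` fixes `a`
and has one cycle more than `x`. Passing from `x' * y` to `x * y` changes the number of cycles
by one, and passing from the orbits of `⟨x', y⟩` to those of `⟨x, y⟩` merges at most the orbits
of `a` and `x a`; when it does merge them, `x * y` has one cycle fewer than `x' * y`. -/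
theorem card_add_numEqvClasses_sameCycle_le [Fintype α] [DecidableEq α] (x y : Perm α) :
    Fintype.card α + numEqvClasses (x * y).SameCycle + numEqvClasses x.SameCycle +
        numEqvClasses y.SameCycle ≤
      2 * Fintype.card α + 2 * numEqvClasses (SameOrbit x y) := by
  induction hk : x.support.card using Nat.strong_induction_on generalizing x with
  | _ k ih =>
  by_cases hx : x = 1
  · subst hx
    have h1 := numEqvClasses_le_card (1 : Perm α).SameCycle
    have h2 : numEqvClasses y.SameCycle ≤ numEqvClasses (SameOrbit 1 y) :=
      numEqvClasses_le_of_le (SameOrbit.equivalence 1 y) (SameCycle.equivalence y)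
        (sameOrbit_le (SameCycle.equivalence y) (fun _ _ h => sameCycle_one.mp h ▸ .rfl) le_rfl)
    rw [one_mul]
    omega
  obtain ⟨a, ha⟩ : ∃ a, x a ≠ a := not_forall.mp fun h => hx (Equiv.ext h)
  set x' := swap a (x a) * x with hx'
  have hfix : x' a = a := by rw [hx', mul_apply, swap_apply_right]
  have hsep : ¬ x'.SameCycle a (x a) := fun h => ha (h.eq_of_left hfix).symm
  have hsplit : numEqvClasses x.SameCycle + 1 = numEqvClasses x'.SameCycle :=
    numEqvClasses_sameCycle_add_one_of_swap_mul (sameCycle_apply_right.mpr .rfl) hsep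
  have ih' := ih _ (hk ▸ card_support_swap_mul ha) x' rfl
  have hxy : x * y = swap a (x a) * (x' * y) := by rw [hx', ← mul_assoc, swap_mul_self_mul]
  have hQ : SameOrbit x y ≤ joinPair (SameOrbit x' y) a (x a) := by
    simpa only [hx', swap_mul_self_mul] using sameOrbit_swap_mul_le x' y a (x a)
  have hQ' := SameOrbit.equivalence x' y
  by_cases hab : SameOrbit x' y a (x a)
  · have h1 : numEqvClasses (SameOrbit x' y) ≤ numEqvClasses (SameOrbit x y) :=
      numEqvClasses_le_of_le (SameOrbit.equivalence x y) hQ'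
        (hQ.trans (joinPair_le hQ' le_rfl hab))
    have h2 := numEqvClasses_sameCycle_swap_mul_le (x' * y) a (x a)
    rw [← hxy] at h2
    omega
  · have h1 := numEqvClasses_sameCycle_swap_mul_add_one
      fun h => hab (sameCycle_mul_le_sameOrbit x' y _ _ h)
    rw [← hxy] at h1
    have h2 := numEqvClasses_joinPair_add_one hQ' hab
    have h3 := numEqvClasses_le_of_le (SameOrbit.equivalence x y) (hQ'.joinPair a (x a)) hQ
    omega

end Equiv.Perm

namespace GW

section RestrictPerm

variable {n : ℕ} {σ τ : Perm (Fin n)} {A : Finset (Fin n)}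

theorem restrictPerm_apply (h : σ.Stabilizes A) (i : Fin n) :
    restrictPerm σ A i = if i ∈ A then σ i else i := by
  rw [restrictPerm, dif_pos (show ∀ i, σ i ∈ A ↔ i ∈ A from h)]
  rfl

theorem restrictPerm_apply_of_mem (h : σ.Stabilizes A) {i : Fin n} (hi : i ∈ A) :
    restrictPerm σ A i = σ i := by
  rw [restrictPerm_apply h, if_pos hi]

theorem restrictPerm_apply_of_notMem (h : σ.Stabilizes A) {i : Fin n} (hi : i ∉ A) :
    restrictPerm σ A i = i := by
  rw [restrictPerm_apply h, if_neg hi]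

theorem restrictPerm_mul (hσ : σ.Stabilizes A) (hτ : τ.Stabilizes A) :
    restrictPerm (σ * τ) A = restrictPerm σ A * restrictPerm τ A := by
  ext i
  simp only [Perm.mul_apply, restrictPerm_apply (hσ.mul hτ), restrictPerm_apply hσ,
    restrictPerm_apply hτ]
  by_cases hi : i ∈ A <;> simp [hi, hτ i]

theorem pow_restrictPerm_apply_of_mem (h : σ.Stabilizes A) {i : Fin n} (hi : i ∈ A) (k : ℕ) :
    (restrictPerm σ A ^ k) i = (σ ^ k) i := by
  induction k with
  | zero => rfl
  | succ k ih =>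
    have hk : (σ ^ k) i ∈ A :=
      (h.mem_iff_of_sameCycle (Perm.sameCycle_pow_right.mpr .rfl)).mp hi
    rw [pow_succ', Perm.mul_apply, ih, restrictPerm_apply_of_mem h hk, pow_succ', Perm.mul_apply]

theorem sameCycle_restrictPerm_iff_of_mem (h : σ.Stabilizes A) {i j : Fin n} (hi : i ∈ A) :
    (restrictPerm σ A).SameCycle i j ↔ σ.SameCycle i j := by
  constructor
  · intro hij
    obtain ⟨k, rfl⟩ := hij.exists_nat_pow_eq
    rw [pow_restrictPerm_apply_of_mem h hi]
    exact Perm.sameCycle_pow_right.mpr .rfl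
  · intro hij
    obtain ⟨k, rfl⟩ := hij.exists_nat_pow_eq
    rw [← pow_restrictPerm_apply_of_mem h hi]
    exact Perm.sameCycle_pow_right.mpr .rfl

theorem sameCycle_restrictPerm_iff_of_notMem (h : σ.Stabilizes A) {i j : Fin n} (hi : i ∉ A) :
    (restrictPerm σ A).SameCycle i j ↔ i = j :=
  ⟨fun hij => hij.eq_of_left (restrictPerm_apply_of_notMem h hi), fun hij => hij ▸ .rfl⟩

theorem sameOrbit_restrictPerm_of_mem (hσ : σ.Stabilizes A) (hτ : τ.Stabilizes A) {i j : Fin n}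
    (hi : i ∈ A) (hij : Perm.SameOrbit σ τ i j) :
    Perm.SameOrbit (restrictPerm σ A) (restrictPerm τ A) i j := by
  set Q := Perm.SameOrbit (restrictPerm σ A) (restrictPerm τ A)
  have hQ : Equivalence Q := Perm.SameOrbit.equivalence _ _
  let r : Fin n → Fin n → Prop := fun s t => (s ∈ A ↔ t ∈ A) ∧ (s ∈ A → Q s t)
  have hr : Equivalence r :=
    ⟨fun s => ⟨Iff.rfl, fun _ => hQ.refl s⟩,
      fun hst => ⟨hst.1.symm, fun ht => hQ.symm (hst.2 (hst.1.mpr ht))⟩,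
      fun hst htu => ⟨hst.1.trans htu.1, fun hs => hQ.trans (hst.2 hs) (htu.2 (hst.1.mp hs))⟩⟩
  refine (Perm.sameOrbit_le hr (fun s t hst => ⟨hσ.mem_iff_of_sameCycle hst, fun hs => ?_⟩)
    (fun s t hst => ⟨hτ.mem_iff_of_sameCycle hst, fun hs => ?_⟩) i j hij).2 hi
  · exact Perm.sameCycle_le_sameOrbit_left _ _ _ _
      ((sameCycle_restrictPerm_iff_of_mem hσ hs).mpr hst)
  · exact Perm.sameCycle_le_sameOrbit_right _ _ _ _
      ((sameCycle_restrictPerm_iff_of_mem hτ hs).mpr hst)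

end RestrictPerm

section Cycles

variable {m n : ℕ} {x y w : GW m n} {A C : Finset (Fin n)} {i j : Fin n}

@[simp] theorem mem_cycleOf : j ∈ cycleOf w i ↔ w.perm.SameCycle i j := by
  simp [cycleOf]

theorem self_mem_cycleOf (w : GW m n) (i : Fin n) : i ∈ cycleOf w i :=
  mem_cycleOf.mpr .rfl

theorem cycleOf_mem_cycles (w : GW m n) (i : Fin n) : cycleOf w i ∈ cycles w :=
  mem_image_of_mem _ (mem_univ i)

theorem mem_cycles : C ∈ cycles w ↔ ∃ i, cycleOf w i = C := by
  simp [cycles]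

theorem cycleOf_eq_cycleOf_iff : cycleOf w i = cycleOf w j ↔ w.perm.SameCycle i j := by
  have h := Perm.SameCycle.equivalence w.perm
  refine ⟨fun hij => mem_cycleOf.mp (hij ▸ self_mem_cycleOf w j), fun hij => ?_⟩
  ext k
  simp only [mem_cycleOf]
  exact ⟨h.trans (h.symm hij), h.trans hij⟩

theorem cycleOf_eq_of_mem (hC : C ∈ cycles w) (hi : i ∈ C) : cycleOf w i = C := by
  obtain ⟨j, rfl⟩ := mem_cycles.mp hC
  exact cycleOf_eq_cycleOf_iff.mpr (Perm.SameCycle.symm (mem_cycleOf.mp hi))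

theorem numCycles_eq_numEqvClasses (w : GW m n) :
    numCycles w = numEqvClasses w.perm.SameCycle := by
  have : cycles w = eqvClasses w.perm.SameCycle := by
    ext C
    have hcls : ∀ i, cycleOf w i = eqvClass w.perm.SameCycle i := fun i => by ext; simp
    simp only [mem_cycles, mem_eqvClasses, hcls]
  rw [numCycles, numEqvClasses, this]

theorem cycleOf_restrict_of_mem (hA : x.perm.Stabilizes A) (hi : i ∈ A) :
    cycleOf (restrict x A) i = cycleOf x i := by
  ext j
  simp only [mem_cycleOf]
  exact sameCycle_restrictPerm_iff_of_mem hA hi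

theorem cycleOf_restrict_of_notMem (hA : x.perm.Stabilizes A) (hi : i ∉ A) :
    cycleOf (restrict x A) i = {i} := by
  ext j
  simp only [mem_cycleOf, mem_singleton]
  rw [eq_comm]
  exact sameCycle_restrictPerm_iff_of_notMem hA hi

theorem cyclesIn_restrict (hA : x.perm.Stabilizes A) :
    cyclesIn (restrict x A) A = cyclesIn x A := by
  ext C
  simp only [cyclesIn, mem_filter, mem_cycles]
  constructor <;> rintro ⟨⟨i, rfl⟩, hC⟩ <;> refine ⟨⟨i, ?_⟩, hC⟩
  · exact (cycleOf_restrict_of_mem hA (hC (self_mem_cycleOf _ i))).symm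
  · exact cycleOf_restrict_of_mem hA (hC (self_mem_cycleOf _ i))

theorem card_cyclesIn_add_card_compl_le (hA : x.perm.Stabilizes A) :
    (cyclesIn x A).card + Aᶜ.card ≤ numEqvClasses (restrictPerm x.perm A).SameCycle := by
  have hdisj : Disjoint (cyclesIn x A) (Aᶜ.image singleton) := by
    rw [disjoint_left]
    rintro C hC hC'
    obtain ⟨i, hi, rfl⟩ := mem_image.mp hC'
    exact mem_compl.mp hi ((mem_filter.mp hC).2 (mem_singleton_self i))
  have hsub : cyclesIn x A ∪ Aᶜ.image singleton ⊆ cycles (restrict x A) := by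
    rw [← cyclesIn_restrict hA]
    refine union_subset (filter_subset _ _) fun C hC => ?_
    obtain ⟨i, hi, rfl⟩ := mem_image.mp hC
    rw [← cycleOf_restrict_of_notMem hA (mem_compl.mp hi)]
    exact cycleOf_mem_cycles _ _
  calc (cyclesIn x A).card + Aᶜ.card = (cyclesIn x A ∪ Aᶜ.image singleton).card := by
        rw [card_union_of_disjoint hdisj, card_image_of_injective _ singleton_injective]
    _ ≤ numCycles (restrict x A) := card_le_card hsub
    _ = _ := numCycles_eq_numEqvClasses _

/-- The Hurwitz inequality for the restrictions of `x`, `y` and `x * y` to `A`: each point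
outside `A` is fixed by them, so it adds one cycle to each and one orbit, which cancel out. -/
theorem card_cyclesIn_add_le (hx : x.perm.Stabilizes A) (hy : y.perm.Stabilizes A)
    (hconn : ∀ i ∈ A, ∀ j ∈ A, Perm.SameOrbit x.perm y.perm i j) :
    (cyclesIn x A).card + (cyclesIn y A).card + (cyclesIn (x * y) A).card ≤ A.card + 2 := by
  have hH := Perm.card_add_numEqvClasses_sameCycle_le (restrictPerm x.perm A)
    (restrictPerm y.perm A)
  rw [← restrictPerm_mul hx hy] at hH
  have hO := numEqvClasses_le_card_compl_add_one (Perm.SameOrbit.equivalence _ _)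
    fun i hi j hj => sameOrbit_restrictPerm_of_mem hx hy hi (hconn i hi j hj)
  have h1 := card_cyclesIn_add_card_compl_le hx
  have h2 := card_cyclesIn_add_card_compl_le hy
  have h3 := card_cyclesIn_add_card_compl_le (x := x * y) (hx.mul hy)
  have hA := card_add_card_compl A
  rw [Fintype.card_fin] at hH hA
  simp only [mul_perm] at h3
  omega

end Cycles

section Parts

variable {m n : ℕ} {u w : GW m n} {B : Finset (Finset (Fin n))} {C C' : Finset (Fin n)}
  {i j : Fin n}

theorem sameCycle_of_mem_cycles (hC : C ∈ cycles w) (hi : i ∈ C) (hj : j ∈ C) :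
    w.perm.SameCycle i j :=
  mem_cycleOf.mp ((cycleOf_eq_of_mem hC hi).symm ▸ hj)

theorem piRel_equivalence (u w : GW m n) : Equivalence (piRel u w) :=
  Relation.EqvGen.is_equivalence _

theorem mem_piPart : C' ∈ piPart u w C ↔ C' ∈ cycles w ∧ piRel u w C C' := by
  classical
  simp [piPart]

theorem mem_piParts : B ∈ piParts u w ↔ ∃ C ∈ cycles w, piPart u w C = B := by
  simp [piParts]

theorem mem_cycles_of_mem_piParts (hB : B ∈ piParts u w) (hC : C ∈ B) : C ∈ cycles w := by
  obtain ⟨C₀, -, rfl⟩ := mem_piParts.mp hB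
  exact (mem_piPart.mp hC).1

theorem piPart_eq_of_mem (hB : B ∈ piParts u w) (hC : C ∈ B) : piPart u w C = B := by
  obtain ⟨C₀, -, rfl⟩ := mem_piParts.mp hB
  have h := piRel_equivalence u w
  have hC₀ := (mem_piPart.mp hC).2
  ext C'
  simp only [mem_piPart]
  exact and_congr_right fun _ => ⟨h.trans hC₀, h.trans (h.symm hC₀)⟩

theorem mem_supp : i ∈ supp B ↔ ∃ C ∈ B, i ∈ C := by
  simp [supp, mem_sup]

theorem mem_supp_iff_cycleOf_mem (hB : B ∈ piParts u w) : i ∈ supp B ↔ cycleOf w i ∈ B := by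
  refine ⟨fun hi => ?_, fun hi => mem_supp.mpr ⟨_, hi, self_mem_cycleOf w i⟩⟩
  obtain ⟨C, hC, hiC⟩ := mem_supp.mp hi
  rwa [cycleOf_eq_of_mem (mem_cycles_of_mem_piParts hB hC) hiC]

theorem cyclesIn_supp (hB : B ∈ piParts u w) : cyclesIn w (supp B) = B := by
  ext C
  simp only [cyclesIn, mem_filter]
  refine ⟨fun ⟨hC, hsub⟩ => ?_, fun hC => ⟨mem_cycles_of_mem_piParts hB hC, le_sup (f := id) hC⟩⟩
  obtain ⟨i, rfl⟩ := mem_cycles.mp hC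
  exact (mem_supp_iff_cycleOf_mem hB).mp (hsub (self_mem_cycleOf w i))

theorem piRel_cycleOf_apply (u w : GW m n) (i : Fin n) :
    piRel u w (cycleOf w i) (cycleOf w (u.perm i)) :=
  .rel _ _ ⟨cycleOf_mem_cycles w i, cycleOf_mem_cycles w _, cycleOf u i, cycleOf_mem_cycles u i,
    ⟨i, mem_inter.mpr ⟨self_mem_cycleOf u i, self_mem_cycleOf w i⟩⟩,
    ⟨u.perm i, mem_inter.mpr ⟨mem_cycleOf.mpr (Perm.sameCycle_apply_right.mpr .rfl),
      self_mem_cycleOf w _⟩⟩⟩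

theorem mem_of_piRel (hB : B ∈ piParts u w) (hC : C ∈ B) (hC' : C' ∈ cycles w)
    (h : piRel u w C C') : C' ∈ B := by
  rw [← piPart_eq_of_mem hB hC]
  exact mem_piPart.mpr ⟨hC', h⟩

theorem stabilizes_supp_left (hB : B ∈ piParts u w) : u.perm.Stabilizes (supp B) := by
  intro i
  rw [mem_supp_iff_cycleOf_mem hB, mem_supp_iff_cycleOf_mem hB]
  exact ⟨fun h => mem_of_piRel hB h (cycleOf_mem_cycles w i)
      ((piRel_equivalence u w).symm (piRel_cycleOf_apply u w i)),
    fun h => mem_of_piRel hB h (cycleOf_mem_cycles w _) (piRel_cycleOf_apply u w i)⟩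

theorem stabilizes_supp_right (hB : B ∈ piParts u w) : w.perm.Stabilizes (supp B) := by
  intro i
  rw [mem_supp_iff_cycleOf_mem hB, mem_supp_iff_cycleOf_mem hB,
    ← cycleOf_eq_cycleOf_iff.mpr (Perm.sameCycle_apply_right.mpr .rfl)]

theorem stabilizes_supp_inv_mul (hB : B ∈ piParts u w) :
    (u⁻¹ * w).perm.Stabilizes (supp B) :=
  (stabilizes_supp_left hB).inv.mul (stabilizes_supp_right hB)

theorem sameOrbit_of_piRel (hC : C ∈ cycles w) (h : piRel u w C C') :
    ∀ p ∈ C, ∀ q ∈ C', Perm.SameOrbit u.perm w.perm p q := by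
  -- `piRelBase` is symmetric, so `piRel` is its reflexive transitive closure.
  have : Std.Symm (piRelBase u w) :=
    ⟨fun _ _ ⟨h₁, h₂, D, hD, hx, hy⟩ => ⟨h₂, h₁, D, hD, hy, hx⟩⟩
  have hQ := Perm.SameOrbit.equivalence u.perm w.perm
  rw [piRel, Relation.EqvGen.eqvGen_eq_reflTransGen] at h
  induction h with
  | refl =>
    exact fun p hp q hq => Perm.sameCycle_le_sameOrbit_right _ _ _ _
      (sameCycle_of_mem_cycles hC hp hq)
  | tail _ hbase ih =>
    obtain ⟨hC₁, hC₂, D, hD, ⟨x, hx⟩, ⟨y, hy⟩⟩ := hbase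
    rw [mem_inter] at hx hy
    intro p hp q hq
    refine hQ.trans (ih p hp x hx.2) (hQ.trans (y := y) ?_ ?_)
    · exact Perm.sameCycle_le_sameOrbit_left _ _ _ _ (sameCycle_of_mem_cycles hD hx.1 hy.1)
    · exact Perm.sameCycle_le_sameOrbit_right _ _ _ _ (sameCycle_of_mem_cycles hC₂ hy.2 hq)

theorem sameOrbit_of_mem_supp (hB : B ∈ piParts u w) (hi : i ∈ supp B) (hj : j ∈ supp B) :
    Perm.SameOrbit u.perm w.perm i j := by
  obtain ⟨C₀, hC₀, rfl⟩ := mem_piParts.mp hB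
  obtain ⟨k, rfl⟩ := mem_cycles.mp hC₀
  have hQ := Perm.SameOrbit.equivalence u.perm w.perm
  have hk := self_mem_cycleOf w k
  rw [mem_supp_iff_cycleOf_mem hB, mem_piPart] at hi hj
  exact hQ.trans (hQ.symm (sameOrbit_of_piRel hC₀ hi.2 k hk i (self_mem_cycleOf w i)))
    (sameOrbit_of_piRel hC₀ hj.2 k hk j (self_mem_cycleOf w j))

theorem pairwiseDisjoint_supp (u w : GW m n) :
    (piParts u w : Set (Finset (Finset (Fin n)))).PairwiseDisjoint supp := by
  intro B₁ hB₁ B₂ hB₂ hne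
  rw [Function.onFun, disjoint_left]
  intro i hi₁ hi₂
  rw [mem_supp_iff_cycleOf_mem hB₁] at hi₁
  rw [mem_supp_iff_cycleOf_mem hB₂] at hi₂
  exact hne ((piPart_eq_of_mem hB₁ hi₁).symm.trans (piPart_eq_of_mem hB₂ hi₂))

theorem exists_mem_supp (u w : GW m n) (i : Fin n) : ∃ B ∈ piParts u w, i ∈ supp B := by
  have hB : piPart u w (cycleOf w i) ∈ piParts u w :=
    mem_piParts.mpr ⟨_, cycleOf_mem_cycles w i, rfl⟩
  refine ⟨_, hB, (mem_supp_iff_cycleOf_mem hB).mpr ?_⟩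
  exact mem_piPart.mpr ⟨cycleOf_mem_cycles w i, (piRel_equivalence u w).refl _⟩

end Parts

section CyclesAndWeights

variable {m n : ℕ} {x y w : GW m n} {A C : Finset (Fin n)} {i : Fin n}

theorem cycles_pairwiseDisjoint (w : GW m n) :
    (cycles w : Set (Finset (Fin n))).PairwiseDisjoint id := by
  intro C₁ hC₁ C₂ hC₂ hne
  rw [Function.onFun, id, id, disjoint_left]
  intro i hi₁ hi₂
  exact hne ((cycleOf_eq_of_mem hC₁ hi₁).symm.trans (cycleOf_eq_of_mem hC₂ hi₂))

theorem cycleOf_subset (hA : x.perm.Stabilizes A) (hi : i ∈ A) : cycleOf x i ⊆ A :=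
  fun _ hj => (hA.mem_iff_of_sameCycle (mem_cycleOf.mp hj)).mp hi

theorem biUnion_cyclesIn (hA : x.perm.Stabilizes A) : (cyclesIn x A).biUnion id = A := by
  ext i
  simp only [mem_biUnion, cyclesIn, mem_filter, id]
  exact ⟨fun ⟨C, ⟨_, hC⟩, hi⟩ => hC hi,
    fun hi => ⟨_, ⟨cycleOf_mem_cycles x i, cycleOf_subset hA hi⟩, self_mem_cycleOf x i⟩⟩

theorem wtTot_restrict (x : GW m n) (A : Finset (Fin n)) :
    wtTot (restrict x A) = ∑ i ∈ A, x.wt i := by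
  simp only [wtTot, restrict]
  rw [sum_ite_mem, univ_inter]

theorem wtTot_restrict_eq_sum_cycWt (hA : x.perm.Stabilizes A) :
    wtTot (restrict x A) = ∑ C ∈ cyclesIn x A, cycWt x C := by
  rw [wtTot_restrict, ← congrArg (∑ i ∈ ·, x.wt i) (biUnion_cyclesIn hA), sum_biUnion]
  · rfl
  · exact (cycles_pairwiseDisjoint x).subset (filter_subset _ _)

theorem wtTot_restrict_mul (hA : x.perm.Stabilizes A) :
    wtTot (restrict (x * y) A) = wtTot (restrict x A) + wtTot (restrict y A) := by
  simp only [wtTot_restrict, mul_wt, sum_add_distrib, add_right_inj]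
  exact sum_equiv x.perm⁻¹ (fun i => (hA.inv i).symm) fun _ _ => rfl

theorem cycWt_restrict (hC : C ⊆ A) : cycWt (restrict x A) C = cycWt x C :=
  sum_congr rfl fun _ hi => if_pos (hC hi)

theorem card_filter_cycles_eq_sum {ι : Type*} {P : Finset ι} {S : ι → Finset (Fin n)}
    (hdisj : (P : Set ι).PairwiseDisjoint S) (hcover : ∀ i, ∃ b ∈ P, i ∈ S b)
    (hS : ∀ b ∈ P, x.perm.Stabilizes (S b)) (p : Finset (Fin n) → Prop) [DecidablePred p] :
    ((cycles x).filter p).card = ∑ b ∈ P, ((cyclesIn x (S b)).filter p).card := by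
  rw [← card_biUnion]
  · congr 1
    ext C
    simp only [mem_biUnion, cyclesIn, mem_filter]
    refine ⟨fun ⟨hC, hp⟩ => ?_, fun ⟨_, _, ⟨hC, _⟩, hp⟩ => ⟨hC, hp⟩⟩
    obtain ⟨i, rfl⟩ := mem_cycles.mp hC
    obtain ⟨b, hb, hi⟩ := hcover i
    exact ⟨b, hb, ⟨hC, cycleOf_subset (hS b hb) hi⟩, hp⟩
  · intro b₁ hb₁ b₂ hb₂ hne
    rw [Function.onFun, disjoint_left]
    intro C hC₁ hC₂
    simp only [cyclesIn, mem_filter] at hC₁ hC₂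
    obtain ⟨i, rfl⟩ := mem_cycles.mp hC₁.1.1
    exact disjoint_left.mp (hdisj hb₁ hb₂ hne) (hC₁.1.2 (self_mem_cycleOf x i))
      (hC₂.1.2 (self_mem_cycleOf x i))

theorem sum_card_eq {ι : Type*} {P : Finset ι} {S : ι → Finset (Fin n)}
    (hdisj : (P : Set ι).PairwiseDisjoint S) (hcover : ∀ i, ∃ b ∈ P, i ∈ S b) :
    ∑ b ∈ P, (S b).card = n := by
  rw [← card_biUnion hdisj, eq_univ_of_forall fun i => mem_biUnion.mpr (hcover i), card_univ,
    Fintype.card_fin]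

theorem numCycles_le (x : GW m n) : numCycles x ≤ n :=
  card_image_le.trans_eq (by rw [card_univ, Fintype.card_fin])

theorem codimfix_add_c0 (x : GW m n) : codimfix x + c0 x = n := by
  have : c0 x ≤ n := (card_filter_le _ _).trans (numCycles_le x)
  rw [codimfix]
  omega

end CyclesAndWeights

section ZeroCycles

variable {m n : ℕ} {x u w : GW m n} {A : Finset (Fin n)} {B : Finset (Finset (Fin n))}

def zeroCyclesIn (x : GW m n) (A : Finset (Fin n)) : Finset (Finset (Fin n)) :=
  (cyclesIn x A).filter fun C => cycWt x C = 0

theorem card_zeroCyclesIn_le (x : GW m n) (A : Finset (Fin n)) :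
    (zeroCyclesIn x A).card ≤ (cyclesIn x A).card :=
  card_filter_le _ _

theorem allCyclesZero_iff (hA : x.perm.Stabilizes A) :
    allCyclesZero x A ↔ (zeroCyclesIn x A).card = (cyclesIn x A).card := by
  rw [zeroCyclesIn, card_filter_eq_iff, allCyclesZero, cyclesIn_restrict hA]
  refine forall₂_congr fun C hC => ?_
  rw [cycWt_restrict (mem_filter.mp hC).2]

theorem wtTot_restrict_eq_zero (hA : x.perm.Stabilizes A) (h : allCyclesZero x A) :
    wtTot (restrict x A) = 0 := by
  rw [wtTot_restrict_eq_sum_cycWt hA]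
  exact sum_eq_zero (card_filter_eq_iff.mp ((allCyclesZero_iff hA).mp h))

theorem oneCycleOfWt_of_card (hA : x.perm.Stabilizes A)
    (h : (zeroCyclesIn x A).card + 1 = (cyclesIn x A).card) :
    oneCycleOfWt x A (wtTot (restrict x A)) := by
  have hcompl : (zeroCyclesIn x A).card + ((cyclesIn x A).filter fun C => cycWt x C ≠ 0).card =
      (cyclesIn x A).card :=
    card_filter_add_card_filter_not _
  obtain ⟨C₀, hC₀⟩ :=
    card_eq_one.mp (show ((cyclesIn x A).filter fun C => cycWt x C ≠ 0).card = 1 by omega)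
  have hmem : ∀ C, C ∈ cyclesIn x A ∧ cycWt x C ≠ 0 ↔ C = C₀ := fun C => by
    rw [← mem_singleton, ← hC₀, mem_filter]
  have hC₀A := (hmem C₀).mpr rfl
  have hzero : ∀ C ∈ cyclesIn x A, C ≠ C₀ → cycWt x C = 0 :=
    fun C hC hne => not_not.mp fun h0 => hne ((hmem C).mp ⟨hC, h0⟩)
  have hsub : ∀ {C}, C ∈ cyclesIn x A → C ⊆ A := fun hC => (mem_filter.mp hC).2
  rw [oneCycleOfWt, cyclesIn_restrict hA]
  refine ⟨C₀, hC₀A.1, ?_, fun C hC hne => by rw [cycWt_restrict (hsub hC), hzero C hC hne]⟩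
  rw [cycWt_restrict (hsub hC₀A.1), wtTot_restrict_eq_sum_cycWt hA,
    sum_eq_single_of_mem C₀ hC₀A.1 hzero]

theorem not_condII_and_condIII (hA : (u⁻¹ * w).perm.Stabilizes A) :
    ¬ (condII u w A ∧ condIII u w A) := fun ⟨hII, hIII⟩ =>
  hIII.2.1 (hIII.1 ▸ wtTot_restrict_eq_zero hA hII.2.2.2)

end ZeroCycles

section PartBounds

variable {m n : ℕ} {u w : GW m n} {B : Finset (Finset (Fin n))}

theorem partWt_eq_wtTot_restrict (hB : B ∈ piParts u w) :
    partWt w B = wtTot (restrict w (supp B)) := by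
  rw [wtTot_restrict_eq_sum_cycWt (stabilizes_supp_right hB), cyclesIn_supp hB, partWt]

theorem wtTot_restrict_supp (hB : B ∈ piParts u w) :
    wtTot (restrict w (supp B)) =
      wtTot (restrict u (supp B)) + wtTot (restrict (u⁻¹ * w) (supp B)) := by
  rw [← wtTot_restrict_mul (stabilizes_supp_left hB), mul_inv_cancel_left]

theorem card_cyclesIn_supp_add_le (hB : B ∈ piParts u w) :
    (cyclesIn u (supp B)).card + (cyclesIn (u⁻¹ * w) (supp B)).card +
      (cyclesIn w (supp B)).card ≤ (supp B).card + 2 := by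
  have hconn : Perm.SameOrbit u.perm w.perm ≤ Perm.SameOrbit u.perm (u⁻¹ * w).perm := by
    refine Perm.sameOrbit_le (Perm.SameOrbit.equivalence _ _)
      (Perm.sameCycle_le_sameOrbit_left _ _) ?_
    simpa only [mul_perm, inv_perm, mul_inv_cancel_left] using
      Perm.sameCycle_mul_le_sameOrbit u.perm (u⁻¹ * w).perm
  simpa only [mul_inv_cancel_left] using card_cyclesIn_add_le (stabilizes_supp_left hB)
    (stabilizes_supp_inv_mul hB) fun i hi j hj => hconn i j (sameOrbit_of_mem_supp hB hi hj)

theorem card_zeroCyclesIn_lt (hB : B ∈ piParts u w) (hwt : partWt w B ≠ 0) :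
    (zeroCyclesIn u (supp B)).card + (zeroCyclesIn (u⁻¹ * w) (supp B)).card <
      (cyclesIn u (supp B)).card + (cyclesIn (u⁻¹ * w) (supp B)).card := by
  have hu := card_zeroCyclesIn_le u (supp B)
  have hv := card_zeroCyclesIn_le (u⁻¹ * w) (supp B)
  by_contra hge
  have hu0 := wtTot_restrict_eq_zero (stabilizes_supp_left hB)
    ((allCyclesZero_iff (stabilizes_supp_left hB)).mpr (by omega))
  have hv0 := wtTot_restrict_eq_zero (stabilizes_supp_inv_mul hB)
    ((allCyclesZero_iff (stabilizes_supp_inv_mul hB)).mpr (by omega))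
  exact hwt (by rw [partWt_eq_wtTot_restrict hB, wtTot_restrict_supp hB, hu0, hv0, add_zero])

/-- The contribution of a part `B` of `Π_u(w)` to `c0(u) + c0(u⁻¹w) + c(w) + #{nonzero parts}`;
the hypothesis of the theorem says that these contributions add up to `n + 2 |Π_u(w)|`. -/
def partCount (u w : GW m n) (B : Finset (Finset (Fin n))) : ℕ :=
  (zeroCyclesIn u (supp B)).card + (zeroCyclesIn (u⁻¹ * w) (supp B)).card +
    (cyclesIn w (supp B)).card + if partWt w B ≠ 0 then 1 else 0

theorem partCount_le_card_cyclesIn (hB : B ∈ piParts u w) :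
    partCount u w B ≤ (cyclesIn u (supp B)).card + (cyclesIn (u⁻¹ * w) (supp B)).card +
      (cyclesIn w (supp B)).card := by
  have hu := card_zeroCyclesIn_le u (supp B)
  have hv := card_zeroCyclesIn_le (u⁻¹ * w) (supp B)
  rw [partCount]
  split_ifs with hwt
  · have := card_zeroCyclesIn_lt hB hwt
    omega
  · omega

theorem partCount_le (hB : B ∈ piParts u w) : partCount u w B ≤ (supp B).card + 2 :=
  (partCount_le_card_cyclesIn hB).trans (card_cyclesIn_supp_add_le hB)

theorem sum_partCount (u w : GW m n) :
    ∑ B ∈ piParts u w, partCount u w B =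
      c0 u + c0 (u⁻¹ * w) + numCycles w + piPartsNonzeroWt u w := by
  have hdisj := pairwiseDisjoint_supp u w
  have hcover := exists_mem_supp u w
  have hc0 : ∀ x : GW m n, (∀ B ∈ piParts u w, x.perm.Stabilizes (supp B)) →
      c0 x = ∑ B ∈ piParts u w, (zeroCyclesIn x (supp B)).card :=
    fun x hx => card_filter_cycles_eq_sum hdisj hcover hx _
  have hnum : numCycles w = ∑ B ∈ piParts u w, (cyclesIn w (supp B)).card := by
    simpa [numCycles] using card_filter_cycles_eq_sum hdisj hcover
      (fun B hB => stabilizes_supp_right hB) fun _ => True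
  rw [hc0 u fun B hB => stabilizes_supp_left hB,
    hc0 (u⁻¹ * w) fun B hB => stabilizes_supp_inv_mul hB, hnum, piPartsNonzeroWt, card_filter]
  simp only [partCount, sum_add_distrib]

theorem exactlyOne_condI_condII_condIII (hB : B ∈ piParts u w)
    (h : partCount u w B = (supp B).card + 2) :
    (condI u w (supp B) ∧ ¬ condII u w (supp B) ∧ ¬ condIII u w (supp B)) ∨
      (¬ condI u w (supp B) ∧ condII u w (supp B) ∧ ¬ condIII u w (supp B)) ∨
      (¬ condI u w (supp B) ∧ ¬ condII u w (supp B) ∧ condIII u w (supp B)) := by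
  have hu := stabilizes_supp_left hB
  have hv := stabilizes_supp_inv_mul hB
  have hsplit := wtTot_restrict_supp hB
  have hH := card_cyclesIn_supp_add_le hB
  have hzu := card_zeroCyclesIn_le u (supp B)
  have hzv := card_zeroCyclesIn_le (u⁻¹ * w) (supp B)
  have hII_III := not_condII_and_condIII (u := u) (w := w) hv
  rw [partCount, partWt_eq_wtTot_restrict hB] at h
  by_cases h0 : wtTot (restrict w (supp B)) = 0
  · rw [if_neg (not_not.mpr h0)] at h
    have hI : condI u w (supp B) :=
      ⟨h0, (allCyclesZero_iff hu).mpr (by omega), (allCyclesZero_iff hv).mpr (by omega)⟩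
    exact Or.inl ⟨hI, fun hII => hII.2.1 h0, fun hIII => hIII.2.1 h0⟩
  rw [if_pos h0] at h
  have hlt := card_zeroCyclesIn_lt hB (by rwa [partWt_eq_wtTot_restrict hB])
  have hnI : ¬ condI u w (supp B) := fun hI => h0 hI.1
  by_cases hzero : (zeroCyclesIn u (supp B)).card = (cyclesIn u (supp B)).card
  · have hu0 := (allCyclesZero_iff hu).mpr hzero
    have hvw : wtTot (restrict (u⁻¹ * w) (supp B)) = wtTot (restrict w (supp B)) := by
      rw [hsplit, wtTot_restrict_eq_zero hu hu0, zero_add]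
    have hIII : condIII u w (supp B) :=
      ⟨hvw, h0, hvw ▸ oneCycleOfWt_of_card hv (by omega), hu0⟩
    exact Or.inr (Or.inr ⟨hnI, fun hII => hII_III ⟨hII, hIII⟩, hIII⟩)
  · have hv0 := (allCyclesZero_iff hv).mpr (by omega)
    have huw : wtTot (restrict u (supp B)) = wtTot (restrict w (supp B)) := by
      rw [hsplit, wtTot_restrict_eq_zero hv hv0, add_zero]
    have hII : condII u w (supp B) :=
      ⟨huw, h0, huw ▸ oneCycleOfWt_of_card hu (by omega), hv0⟩
    exact Or.inr (Or.inl ⟨hnI, hII, fun hIII => hII_III ⟨hII, hIII⟩⟩)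

end PartBounds

end GW

theorem stmt8_general (m n : ℕ) (u w : GW m n)
    (heq : (GW.codimfix u : ℤ) + (GW.codimfix (u⁻¹ * w) : ℤ) =
      (n : ℤ) + (GW.numCycles w : ℤ) - 2 * ((GW.piParts u w).card : ℤ) +
        (GW.piPartsNonzeroWt u w : ℤ)) :
    ∀ B ∈ GW.piParts u w,
      (((GW.cyclesIn (GW.restrict u (GW.supp B)) (GW.supp B)).card : ℤ) +
          ((GW.cyclesIn (GW.restrict (u⁻¹ * w) (GW.supp B)) (GW.supp B)).card : ℤ) =
        ((GW.supp B).card : ℤ) -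
          ((GW.cyclesIn (GW.restrict w (GW.supp B)) (GW.supp B)).card : ℤ) + 2) ∧
      ((GW.condI u w (GW.supp B) ∧ ¬ GW.condII u w (GW.supp B) ∧
          ¬ GW.condIII u w (GW.supp B)) ∨
       (¬ GW.condI u w (GW.supp B) ∧ GW.condII u w (GW.supp B) ∧
          ¬ GW.condIII u w (GW.supp B)) ∨
       (¬ GW.condI u w (GW.supp B) ∧ ¬ GW.condII u w (GW.supp B) ∧
          GW.condIII u w (GW.supp B))) := by
  have hsum : ∑ B ∈ GW.piParts u w, GW.partCount u w B =
      ∑ B ∈ GW.piParts u w, ((GW.supp B).card + 2) := by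
    have hu := GW.codimfix_add_c0 u
    have hv := GW.codimfix_add_c0 (u⁻¹ * w)
    rw [GW.sum_partCount, sum_add_distrib, GW.sum_card_eq (GW.pairwiseDisjoint_supp u w)
      (GW.exists_mem_supp u w), sum_const, smul_eq_mul]
    omega
  intro B hB
  have hB' := (sum_eq_sum_iff_of_le fun B hB => GW.partCount_le hB).mp hsum B hB
  have hle := GW.partCount_le_card_cyclesIn hB
  have hH := GW.card_cyclesIn_supp_add_le hB
  rw [GW.cyclesIn_restrict (GW.stabilizes_supp_left hB),
    GW.cyclesIn_restrict (GW.stabilizes_supp_inv_mul hB),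
    GW.cyclesIn_restrict (GW.stabilizes_supp_right hB)]
  exact ⟨by omega, GW.exactlyOne_condI_condII_condIII hB hB'⟩

/-- Let `u, w ∈ G(m,p,n)` with
`codimfix(u) + codimfix(u⁻¹w) = n + c(w) − 2|Π_u(w)| + #{parts of Π_u(w) of nonzero weight}`.
Then for each part `B` of `Π_u(w)` (with support `A = Supp(B)`):
`c(u|_B) + c(u⁻¹w|_B) = #Supp(B) − c(w|_B) + 2`, and exactly one of the cases
(i), (ii), (iii) holds. -/
theorem stmt8 (m p n : ℕ) (hm : 0 < m) (hp : 0 < p) (hn : 0 < n) (hpm : p ∣ m)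
    (u w : GW m n) (hu : GW.Gmem p hpm u) (hw : GW.Gmem p hpm w)
    (heq : (GW.codimfix u : ℤ) + (GW.codimfix (u⁻¹ * w) : ℤ) =
      (n : ℤ) + (GW.numCycles w : ℤ) - 2 * ((GW.piParts u w).card : ℤ) +
        (GW.piPartsNonzeroWt u w : ℤ)) :
    ∀ B ∈ GW.piParts u w,
      (((GW.cyclesIn (GW.restrict u (GW.supp B)) (GW.supp B)).card : ℤ) +
          ((GW.cyclesIn (GW.restrict (u⁻¹ * w) (GW.supp B)) (GW.supp B)).card : ℤ) =
        ((GW.supp B).card : ℤ) -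
          ((GW.cyclesIn (GW.restrict w (GW.supp B)) (GW.supp B)).card : ℤ) + 2) ∧
      ((GW.condI u w (GW.supp B) ∧ ¬ GW.condII u w (GW.supp B) ∧
          ¬ GW.condIII u w (GW.supp B)) ∨
       (¬ GW.condI u w (GW.supp B) ∧ GW.condII u w (GW.supp B) ∧
          ¬ GW.condIII u w (GW.supp B)) ∨
       (¬ GW.condI u w (GW.supp B) ∧ ¬ GW.condII u w (GW.supp B) ∧
          GW.condIII u w (GW.supp B))) :=
  stmt8_general m n u w heq
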